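/- For every nonzero k ∈ ℕ, the limit lim_{n→∞} SD(t[0..n-1], t[k..n+k-1]) exists and lies in the interval [1/3, 2/3], where t is the Thue–Morse sequence. -/

import Mathlib

/-!
Write `sgn n = (-1) ^ t n`. The proportion of agreements is `(1 + S(n, k) / n) / 2`, where
`S(n, k) = ∑_{i<n} sgn i * sgn (i + k)`. Splitting the sum into even and odd indices and using
`sgn (2i) = sgn i`, `sgn (2i+1) = -sgn i` gives `S(2n, 2m) = 2 S(n, m)` and
`S(2n, 2m+1) = -(S(n, m) + S(n, m+1))`. Hence, by induction on the number of binary digits of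
`n`, `S(n, k) = n c_k + O(k log n)`, where
`c_0 = 1`, `c_{2m} = c_m`, `c_{2m+1} = -(c_m + c_{m+1}) / 2`. These averaging recursions keep
`|c_k| ≤ 1/3` for `k ≥ 1`, so the limit `(1 + c_k) / 2` lies in `[1/3, 2/3]`.
-/

def t (n : ℕ) : ℕ := (Nat.digits 2 n).count 1 % 2

open Filter Finset Asymptotics

theorem Finset.sum_range_two_mul {M : Type*} [AddCommMonoid M] (f : ℕ → M) (n : ℕ) :
    ∑ i ∈ range (2 * n), f i = ∑ i ∈ range n, (f (2 * i) + f (2 * i + 1)) := by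
  induction n with
  | zero => simp
  | succ n ih =>
    rw [mul_add, mul_one, sum_range_succ, sum_range_succ, sum_range_succ, ih, add_assoc]

lemma t_two_mul (n : ℕ) : t (2 * n) = t n := by
  rcases Nat.eq_zero_or_pos n with rfl | hn
  · rfl
  · rw [t, Nat.digits_def' one_lt_two (by omega)]
    simp [t]

lemma t_two_mul_add_one (n : ℕ) : t (2 * n + 1) = (t n + 1) % 2 := by
  rw [t, Nat.digits_def' one_lt_two (by omega)]
  simp [t, Nat.add_mod, show (2 * n + 1) / 2 = n by omega]

lemma isLittleO_natLog_add_one (b : ℕ) :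
    (fun n : ℕ => (Nat.log b n : ℝ) + 1) =o[atTop] (fun n : ℕ => (n : ℝ)) := by
  have hnatLog : (fun n : ℕ => (Nat.log b n : ℝ)) =O[atTop] (fun n : ℕ => Real.log n) := by
    refine IsBigO.of_bound (Real.log b)⁻¹ (Eventually.of_forall fun n => ?_)
    rw [Real.norm_natCast, Real.norm_of_nonneg (Real.log_natCast_nonneg n), inv_mul_eq_div]
    exact Real.natLog_le_logb n b
  have hone : (fun _ : ℕ => (1 : ℝ)) =o[atTop] (fun n : ℕ => (n : ℝ)) :=
    (isLittleO_one_left_iff ℝ).mpr (by simpa using tendsto_natCast_atTop_atTop)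
  exact (hnatLog.trans_isLittleO
    (Real.isLittleO_log_id_atTop.comp_tendsto tendsto_natCast_atTop_atTop)).add hone

namespace ThueMorse

noncomputable def sgn (n : ℕ) : ℝ := (-1) ^ t n

lemma sgn_two_mul (n : ℕ) : sgn (2 * n) = sgn n := by rw [sgn, t_two_mul, sgn]

lemma sgn_two_mul_add_one (n : ℕ) : sgn (2 * n + 1) = -sgn n := by
  rw [sgn, sgn, t_two_mul_add_one, ← neg_one_pow_eq_pow_mod_two, pow_succ, mul_neg_one]

lemma abs_sgn (n : ℕ) : |sgn n| = 1 := by simp [sgn]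

lemma ite_t_eq_t (i j : ℕ) :
    (if t i = t j then (1 : ℝ) else 0) = (1 + sgn i * sgn j) / 2 := by
  have hi : t i < 2 := Nat.mod_lt _ two_pos
  have hj : t j < 2 := Nat.mod_lt _ two_pos
  rw [sgn, sgn]
  interval_cases t i <;> interval_cases t j <;> norm_num

noncomputable def autocorr (n k : ℕ) : ℝ := ∑ i ∈ range n, sgn i * sgn (i + k)

lemma autocorr_zero_right (n : ℕ) : autocorr n 0 = n := by
  simp [autocorr, sgn, ← pow_add, ← two_mul, pow_mul]

lemma autocorr_two_mul_two_mul (n m : ℕ) : autocorr (2 * n) (2 * m) = 2 * autocorr n m := by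
  rw [autocorr, sum_range_two_mul, autocorr, mul_sum]
  refine sum_congr rfl fun i _ => ?_
  rw [show 2 * i + 2 * m = 2 * (i + m) by ring, show 2 * i + 1 + 2 * m = 2 * (i + m) + 1 by ring,
    sgn_two_mul, sgn_two_mul, sgn_two_mul_add_one, sgn_two_mul_add_one]
  ring

lemma autocorr_two_mul_two_mul_add_one (n m : ℕ) :
    autocorr (2 * n) (2 * m + 1) = -(autocorr n m + autocorr n (m + 1)) := by
  rw [autocorr, sum_range_two_mul, autocorr, autocorr, ← sum_add_distrib, ← sum_neg_distrib]
  refine sum_congr rfl fun i _ => ?_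
  rw [show 2 * i + (2 * m + 1) = 2 * (i + m) + 1 by ring,
    show 2 * i + 1 + (2 * m + 1) = 2 * (i + (m + 1)) by ring,
    sgn_two_mul, sgn_two_mul, sgn_two_mul_add_one, sgn_two_mul_add_one]
  ring

/-- `corr 1 = -1 / 3` solves the odd recursion at `m = 0`, which reads `c₁ = -(c₀ + c₁) / 2`. -/
noncomputable def corr (k : ℕ) : ℝ :=
  if hk₀ : k = 0 then 1
  else if hk₁ : k = 1 then -1 / 3
  else if hk : Even k then corr (k / 2)
  else -(corr (k / 2) + corr (k / 2 + 1)) / 2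
decreasing_by
  all_goals (try rw [Nat.even_iff] at hk); omega

lemma corr_zero : corr 0 = 1 := by rw [corr]; simp

lemma corr_one : corr 1 = -1 / 3 := by rw [corr]; simp

lemma corr_two_mul (m : ℕ) : corr (2 * m) = corr m := by
  rcases Nat.eq_zero_or_pos m with rfl | hm
  · rfl
  · rw [corr]
    simp [hm.ne', show 2 * m ≠ 1 by omega]

lemma corr_two_mul_add_one (m : ℕ) : corr (2 * m + 1) = -(corr m + corr (m + 1)) / 2 := by
  rcases Nat.eq_zero_or_pos m with rfl | hm
  · rw [corr, corr_zero]; norm_num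
  · rw [corr]
    simp [show 2 * m ≠ 0 by omega, show (2 * m + 1) / 2 = m by omega]

lemma abs_corr_le_third {k : ℕ} (hk : k ≠ 0) : |corr k| ≤ 1 / 3 := by
  induction k using Nat.strong_induction_on with
  | _ k ih =>
    rcases Nat.even_or_odd' k with ⟨m, rfl | rfl⟩
    · rw [corr_two_mul]
      exact ih m (by omega) (by omega)
    · rcases Nat.eq_zero_or_pos m with rfl | hm
      · rw [corr_one]; norm_num [abs_div]
      · rw [corr_two_mul_add_one, abs_div, abs_neg, abs_two]
        have := abs_add_le (corr m) (corr (m + 1))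
        linarith [ih m (by omega) (by omega), ih (m + 1) (by omega) (by omega)]

lemma abs_corr_le_one (k : ℕ) : |corr k| ≤ 1 := by
  rcases eq_or_ne k 0 with rfl | hk
  · simp [corr_zero]
  · linarith [abs_corr_le_third hk]

noncomputable def autocorrError (n k : ℕ) : ℝ := autocorr n k - n * corr k

lemma autocorrError_zero_right (n : ℕ) : autocorrError n 0 = 0 := by
  simp [autocorrError, autocorr_zero_right, corr_zero]

lemma autocorrError_two_mul_two_mul (n m : ℕ) :
    autocorrError (2 * n) (2 * m) = 2 * autocorrError n m := by
  simp only [autocorrError, autocorr_two_mul_two_mul, corr_two_mul]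
  push_cast
  ring

lemma autocorrError_two_mul_two_mul_add_one (n m : ℕ) :
    autocorrError (2 * n) (2 * m + 1) = -(autocorrError n m + autocorrError n (m + 1)) := by
  simp only [autocorrError, autocorr_two_mul_two_mul_add_one, corr_two_mul_add_one]
  push_cast
  ring

lemma abs_autocorrError_succ_sub_le (n k : ℕ) :
    |autocorrError (n + 1) k - autocorrError n k| ≤ 2 := by
  have hstep : autocorrError (n + 1) k - autocorrError n k = sgn n * sgn (n + k) - corr k := by
    simp only [autocorrError, autocorr, sum_range_succ]
    push_cast
    ring
  rw [hstep]
  calc |sgn n * sgn (n + k) - corr k| ≤ |sgn n * sgn (n + k)| + |corr k| := abs_sub _ _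
    _ ≤ 2 := by rw [abs_mul, abs_sgn, abs_sgn]; linarith [abs_corr_le_one k]

lemma abs_autocorrError_le_two_mul_div_two (n k : ℕ) :
    |autocorrError n k| ≤ |autocorrError (2 * (n / 2)) k| + 2 := by
  rcases Nat.even_or_odd' n with ⟨n', rfl | rfl⟩
  · simp
  · rw [show (2 * n' + 1) / 2 = n' by omega]
    have := abs_sub_abs_le_abs_sub (autocorrError (2 * n' + 1) k) (autocorrError (2 * n') k)
    linarith [abs_autocorrError_succ_sub_le (2 * n') k]

lemma abs_autocorrError_le {j n : ℕ} (hn : n < 2 ^ j) (k : ℕ) :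
    |autocorrError n k| ≤ 2 * k * j := by
  induction j generalizing n k with
  | zero => simp [show n = 0 by simpa using hn, autocorrError, autocorr]
  | succ j ih =>
    rcases eq_or_ne k 0 with rfl | hk
    · simp [autocorrError_zero_right]
    have hhalf : n / 2 < 2 ^ j := by rw [pow_succ] at hn; omega
    have heven : |autocorrError (2 * (n / 2)) k| ≤ 2 * k * j := by
      rcases Nat.even_or_odd' k with ⟨m, rfl | rfl⟩
      · rw [autocorrError_two_mul_two_mul, abs_mul, abs_two]
        have := ih hhalf m
        push_cast at this ⊢
        linarith
      · rw [autocorrError_two_mul_two_mul_add_one, abs_neg]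
        have := abs_add_le (autocorrError (n / 2) m) (autocorrError (n / 2) (m + 1))
        have h₁ := ih hhalf m
        have h₂ := ih hhalf (m + 1)
        push_cast at h₁ h₂ ⊢
        linarith
    have hodd := abs_autocorrError_le_two_mul_div_two n k
    have hk1 : (1 : ℝ) ≤ k := by exact_mod_cast Nat.one_le_iff_ne_zero.mpr hk
    push_cast
    linarith

lemma autocorrError_isLittleO (k : ℕ) :
    (fun n => autocorrError n k) =o[atTop] (fun n : ℕ => (n : ℝ)) := by
  refine IsBigO.trans_isLittleO ?_ (isLittleO_natLog_add_one 2)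
  refine IsBigO.of_bound (2 * k) (Eventually.of_forall fun n => ?_)
  rw [Real.norm_eq_abs, Real.norm_of_nonneg (by positivity)]
  simpa using abs_autocorrError_le (Nat.lt_pow_succ_log_self one_lt_two n) k

lemma tendsto_autocorr_div (k : ℕ) :
    Tendsto (fun n : ℕ => autocorr n k / n) atTop (nhds (corr k)) := by
  have h := ((autocorrError_isLittleO k).tendsto_div_nhds_zero).add_const (corr k)
  rw [zero_add] at h
  refine h.congr' ?_
  filter_upwards [eventually_ne_atTop 0] with n hn
  rw [autocorrError]
  field_simp
  ring

end ThueMorse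

open ThueMorse

theorem mahler_shift_limit (k : ℕ) (hk : k ≠ 0) :
    ∃ L : ℝ, Filter.Tendsto
        (fun n : ℕ => (∑ i ∈ Finset.range n, if t i = t (i + k) then (1 : ℝ) else 0) / n)
        Filter.atTop (nhds L) ∧ 1/3 ≤ L ∧ L ≤ 2/3 := by
  refine ⟨(1 + corr k) / 2, ?_, ?_⟩
  · refine (((tendsto_autocorr_div k).const_add 1).div_const 2).congr' ?_
    filter_upwards [eventually_ne_atTop 0] with n hn
    simp only [ite_t_eq_t, ← sum_div, sum_add_distrib, sum_const, card_range, nsmul_one]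
    rw [autocorr]
    field_simp
  · have := abs_le.mp (abs_corr_le_third hk)
    constructor <;> linarith
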